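/- arXiv:2602.21056 — 4 statements merged into one kernel-verified Lean document; each statement's English description precedes it below -/
import Mathlib

section
/- Let N ≥ 2 be an integer and let A = (a_{jk}) and B = (b_{jk}) be positive semidefinite N×N complex matrices (indices running from 0 to N−1). Then det(A ⋄ B) ≥ b_{00}^N · det A + a_{00}^N · det B, where ⋄ denotes the Jury product. -/
/-!
Write `A = x x* + A₁` and `B = y y* + B₁`, where `A₁` and `B₁` are positive semidefinite with
vanishing first row and column (Schur complements of `a₀₀` and `b₀₀`), and let `X°` denote `X` with
its first row and column deleted, so that `det A = a₀₀ det A₁°` and `det B = b₀₀ det B₁°`. The Jury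
product with a rank-one factor is a congruence by a lower triangular Toeplitz matrix,
`A ⋄ y y* = T_y A T_y*`. Hence `A ⋄ B = c c* + M` with `c₀ = x₀ y₀` and
`M = (x x* ⋄ B₁) + (A₁ ⋄ y y*) + (A₁ ⋄ B₁)` positive semidefinite with vanishing first row and
column, so `det (A ⋄ B) = a₀₀ b₀₀ det M°`. The first two summands of `M°` have determinants
`a₀₀^{N-1} det B₁°` and `b₀₀^{N-1} det A₁°`, and superadditivity of the determinant on positive
semidefinite matrices, `det (X + Y) ≥ det X + det Y`, gives the bound.
-/

open Finset ComplexOrder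

/-- The Jury product of two `N × N` complex matrices (indices `0, …, N-1`):
`(A ⋄ B)_{jk} = ∑_{m=0}^{j} ∑_{n=0}^{k} a_{m,n} b_{j-m,k-n}`.
(For `m ≤ j` the `Fin`-subtraction `j - m` agrees with natural subtraction.) -/
noncomputable def jury {N : ℕ} (A B : Matrix (Fin N) (Fin N) ℂ) :
    Matrix (Fin N) (Fin N) ℂ :=
  Matrix.of fun j k => ∑ m ∈ Finset.Iic j, ∑ n ∈ Finset.Iic k, A m n * B (j - m) (k - n)

open Matrix

namespace Fin

variable {n : ℕ} {a b : Fin n}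

theorem sub_le_self_of_le (h : b ≤ a) : a - b ≤ a := by
  rw [Fin.le_def, Fin.sub_val_of_le h]
  omega

theorem sub_sub_cancel_of_le (h : b ≤ a) : a - (a - b) = b := by
  ext
  rw [Fin.sub_val_of_le (sub_le_self_of_le h), Fin.sub_val_of_le h]
  have : b.val ≤ a.val := h
  omega

theorem sum_Iic_reflect {M : Type*} [AddCommMonoid M] (a : Fin n) (f : Fin n → M) :
    ∑ i ∈ Iic a, f (a - i) = ∑ i ∈ Iic a, f i :=
  Finset.sum_nbij' (a - ·) (a - ·)
    (fun _ hi => by simpa using sub_le_self_of_le (mem_Iic.mp hi))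
    (fun _ hi => by simpa using sub_le_self_of_le (mem_Iic.mp hi))
    (fun _ hi => sub_sub_cancel_of_le (mem_Iic.mp hi))
    (fun _ hi => sub_sub_cancel_of_le (mem_Iic.mp hi))
    (fun _ _ => rfl)

theorem Iic_zero : Iic (0 : Fin (n + 1)) = {0} := Iic_bot

end Fin

theorem Finset.one_add_prod_le_prod_one_add {ι R : Type*} [CommSemiring R] [PartialOrder R]
    [IsOrderedRing R] {s : Finset ι} (hs : s.Nonempty) {f : ι → R} (hf : ∀ i ∈ s, 0 ≤ f i) :
    1 + ∏ i ∈ s, f i ≤ ∏ i ∈ s, (1 + f i) := by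
  classical
  calc 1 + ∏ i ∈ s, f i = ∑ t ∈ {∅, s}, ∏ i ∈ t, f i := by
        rw [sum_pair hs.ne_empty.symm, prod_empty]
    _ ≤ ∑ t ∈ s.powerset, ∏ i ∈ t, f i :=
        sum_le_sum_of_subset_of_nonneg (by simp [insert_subset_iff])
          fun t ht _ => prod_nonneg fun i hi => hf i (mem_powerset.mp ht hi)
    _ = ∏ i ∈ s, (1 + f i) := (prod_one_add s).symm

namespace Matrix

section LowerToeplitz

variable {R : Type*} {n : ℕ}

def lowerToeplitz [Zero R] (x : Fin n → R) : Matrix (Fin n) (Fin n) R :=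
  of fun j p => if p ≤ j then x (j - p) else 0

theorem lowerToeplitz_mul_apply [NonUnitalNonAssocSemiring R] (x : Fin n → R)
    (M : Matrix (Fin n) (Fin n) R) (j k : Fin n) :
    (lowerToeplitz x * M) j k = ∑ p ∈ Iic j, x (j - p) * M p k := by
  simp [lowerToeplitz, mul_apply, ite_mul, Finset.sum_ite, Finset.filter_ge_eq_Iic]

theorem mul_conjTranspose_lowerToeplitz_apply [NonUnitalNonAssocSemiring R] [StarRing R]
    (x : Fin n → R) (M : Matrix (Fin n) (Fin n) R) (j k : Fin n) :
    (M * (lowerToeplitz x)ᴴ) j k = ∑ q ∈ Iic k, M j q * star (x (k - q)) := by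
  simp [lowerToeplitz, mul_apply, apply_ite star, mul_ite, Finset.sum_ite,
    Finset.filter_ge_eq_Iic]

theorem lowerToeplitz_mulVec_zero [NonUnitalNonAssocSemiring R] (y x : Fin (n + 1) → R) :
    (lowerToeplitz y *ᵥ x) 0 = y 0 * x 0 := by
  simp [mulVec, dotProduct, lowerToeplitz]

theorem det_submatrix_succ_lowerToeplitz [CommRing R] (x : Fin (n + 1) → R) :
    ((lowerToeplitz x).submatrix Fin.succ Fin.succ).det = x 0 ^ n := by
  have htri : ((lowerToeplitz x).submatrix Fin.succ Fin.succ).IsLowerTriangular :=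
    fun i j hij => by simp [lowerToeplitz, not_le.mpr (OrderDual.toDual_lt_toDual.mp hij)]
  rw [det_of_isLowerTriangular _ htri]
  simp [lowerToeplitz]

end LowerToeplitz

theorem mul_vecMulVec_star_mul_conjTranspose {R m n : Type*} [Fintype n] [CommSemiring R]
    [StarRing R] (T : Matrix m n R) (x : n → R) :
    T * vecMulVec x (star x) * Tᴴ = vecMulVec (T *ᵥ x) (star (T *ᵥ x)) := by
  rw [mul_vecMulVec, vecMulVec_mul, star_mulVec]

section Border

variable {R : Type*} {n : ℕ}

theorem det_vecMulVec_add_of_border_eq_zero [Field R] (u v : Fin (n + 1) → R)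
    {M : Matrix (Fin (n + 1)) (Fin (n + 1)) R} (hM : ∀ j, M 0 j = 0 ∧ M j 0 = 0) :
    (vecMulVec u v + M).det = u 0 * v 0 * (M.submatrix Fin.succ Fin.succ).det := by
  obtain hu | hu := eq_or_ne (u 0) 0
  · rw [hu, zero_mul, zero_mul]
    exact det_eq_zero_of_row_eq_zero 0 fun k => by simp [vecMulVec_apply, hu, hM]
  -- subtracting `u i / u 0` times row `0` from each row `i ≠ 0` leaves `B`,
  -- whose column `0` is `u 0 * v 0` times the first unit vector
  set B := vecMulVec (Pi.single 0 (u 0)) v + M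
  have hB : (vecMulVec u v + M).det = B.det := by
    refine det_eq_of_forall_row_eq_smul_add_const (fun i => if i = 0 then 0 else u i / u 0) 0
      (if_pos rfl) fun i k => ?_
    rcases eq_or_ne i 0 with rfl | hi
    · simp [B, vecMulVec_apply]
    · simp [B, vecMulVec_apply, hi, hM, add_comm, ← mul_assoc, div_mul_cancel₀ _ hu]
  rw [hB, det_succ_column_zero, Fin.sum_univ_succ]
  simp [B, vecMulVec_apply, hM, Fin.succ_ne_zero, submatrix]

theorem submatrix_succ_mul_mul_of_border_eq_zero [NonUnitalNonAssocSemiring R]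
    (T U : Matrix (Fin (n + 1)) (Fin (n + 1)) R) {M : Matrix (Fin (n + 1)) (Fin (n + 1)) R}
    (hM : ∀ j, M 0 j = 0 ∧ M j 0 = 0) :
    (T * M * U).submatrix Fin.succ Fin.succ =
      T.submatrix Fin.succ Fin.succ * M.submatrix Fin.succ Fin.succ *
        U.submatrix Fin.succ Fin.succ := by
  ext j k
  simp [mul_apply, Fin.sum_univ_succ, hM]

end Border

section PosSemidef

variable {𝕜 : Type*} [RCLike 𝕜] {n : Type*} [Fintype n] [DecidableEq n]

theorem PosSemidef.apply_eq_zero_of_diag_eq_zero {A : Matrix n n 𝕜} (hA : A.PosSemidef)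
    {i : n} (hi : A i i = 0) (j : n) : A i j = 0 ∧ A j i = 0 := by
  have hcol : A *ᵥ Pi.single i 1 = 0 := (hA.dotProduct_mulVec_zero_iff _).mp (by simp [hi])
  have hji : A j i = 0 := by simpa using congrFun hcol j
  exact ⟨by rw [← hA.isHermitian.apply, hji, star_zero], hji⟩

theorem PosSemidef.sub_inv_smul_vecMulVec_row {A : Matrix n n 𝕜} (hA : A.PosSemidef) (i : n) :
    (A - (A i i)⁻¹ • vecMulVec (star (A i)) (A i)).PosSemidef := by
  obtain ha | ha := eq_or_ne (A i i) 0
  · simpa [ha] using hA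
  set a := A i i
  set V := vecMulVec (star (A i)) (A i)
  have hcol : A.col i = star (A i) := funext fun j => (hA.isHermitian.apply j i).symm
  have hstar_a : star a = a := hA.isHermitian.apply i i
  -- congruence of `A` by the projection `1 - P` along the `i`-th unit vector
  set P := vecMulVec (Pi.single i 1) (a⁻¹ • A i)
  have hAP : A * P = a⁻¹ • V := by
    rw [mul_vecMulVec, mulVec_single_one, hcol, vecMulVec_smul]
  have hPA : Pᴴ * A = a⁻¹ • V := by
    rw [conjTranspose_vecMulVec, vecMulVec_mul, ← Pi.single_star, star_one, single_one_vecMul,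
      star_smul, star_inv₀, hstar_a, smul_vecMulVec]
    rfl
  have hVP : a⁻¹ • V * P = a⁻¹ • V := by
    rw [Matrix.smul_mul, vecMulVec_mul_vecMulVec, dotProduct_single_one, smul_smul,
      mul_inv_cancel₀ ha, one_smul]
  have key : (1 - P)ᴴ * A * (1 - P) = A - a⁻¹ • V := by
    rw [conjTranspose_sub, conjTranspose_one, sub_mul, one_mul, mul_sub, mul_one, sub_mul,
      hAP, hPA, hVP]
    abel
  rw [← key]
  exact hA.conjTranspose_mul_mul_same _

theorem PosSemidef.exists_eq_vecMulVec_add {A : Matrix n n 𝕜} (hA : A.PosSemidef) (i : n) :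
    ∃ (x : n → 𝕜) (A' : Matrix n n 𝕜), A = vecMulVec x (star x) + A' ∧ A'.PosSemidef ∧
      ∀ j, A' i j = 0 ∧ A' j i = 0 := by
  set a := A i i
  set x : n → 𝕜 := (((√(RCLike.re a))⁻¹ : ℝ) : 𝕜) • star (A i)
  have hx : vecMulVec x (star x) = a⁻¹ • vecMulVec (star (A i)) (A i) := by
    have hsq : ((√(RCLike.re a))⁻¹ : ℝ) ^ 2 = (RCLike.re a)⁻¹ := by
      rw [inv_pow, Real.sq_sqrt (RCLike.nonneg_iff.mp hA.diag_nonneg).1]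
    have hre : ((RCLike.re a : ℝ) : 𝕜) = a := hA.isHermitian.coe_re_apply_self i
    rw [star_smul, star_star, RCLike.star_def, RCLike.conj_ofReal, smul_vecMulVec,
      vecMulVec_smul, smul_smul, ← RCLike.ofReal_mul, ← sq, hsq, RCLike.ofReal_inv, hre]
  have hA' := hA.sub_inv_smul_vecMulVec_row i
  refine ⟨x, _, by rw [hx, add_sub_cancel], hA', hA'.apply_eq_zero_of_diag_eq_zero ?_⟩
  have hstar_a : star a = a := hA.isHermitian.apply i i
  simp only [sub_apply, smul_apply, vecMulVec_apply, Pi.star_apply, smul_eq_mul]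
  rw [hstar_a, ← mul_assoc, inv_mul_mul_self, sub_self]

theorem IsHermitian.det_one_add {M : Matrix n n 𝕜} (hM : M.IsHermitian) :
    (1 + M).det = ∏ i, (1 + (hM.eigenvalues i : 𝕜)) := by
  conv_lhs => rw [hM.spectral_theorem]
  rw [← map_one (Unitary.conjStarAlgAut 𝕜 _ hM.eigenvectorUnitary), ← map_add,
    Unitary.conjStarAlgAut_apply, det_mul, det_mul, mul_right_comm, ← det_mul,
    Unitary.mul_star_self_of_mem hM.eigenvectorUnitary.2, det_one, one_mul, ← diagonal_one,
    diagonal_add, det_diagonal]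
  rfl

variable [Nonempty n]

theorem PosSemidef.one_add_det_le_det_one_add {M : Matrix n n 𝕜} (hM : M.PosSemidef) :
    1 + M.det ≤ (1 + M).det := by
  rw [hM.isHermitian.det_one_add, hM.isHermitian.det_eq_prod_eigenvalues]
  exact_mod_cast Finset.one_add_prod_le_prod_one_add univ_nonempty
    fun i _ => hM.eigenvalues_nonneg i

open scoped MatrixOrder in
theorem PosDef.det_add_det_le_det_add {X Y : Matrix n n 𝕜} (hX : X.PosDef)
    (hY : Y.PosSemidef) : X.det + Y.det ≤ (X + Y).det := by
  obtain ⟨S, rfl⟩ := CStarAlgebra.nonneg_iff_eq_star_mul_self.mp hX.posSemidef.nonneg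
  rw [star_eq_conjTranspose] at hX ⊢
  have hS : IsUnit S.det := by
    have := hX.det_pos.ne'
    rw [det_mul, det_conjTranspose] at this
    exact (right_ne_zero_of_mul this).isUnit
  set M := (S⁻¹)ᴴ * Y * S⁻¹
  have hM : M.PosSemidef := hY.conjTranspose_mul_mul_same _
  have hSM : Sᴴ * M * S = Y := by
    rw [Matrix.mul_assoc, Matrix.mul_assoc, nonsing_inv_mul _ hS, Matrix.mul_one,
      ← Matrix.mul_assoc, ← conjTranspose_mul, nonsing_inv_mul _ hS, conjTranspose_one,
      Matrix.one_mul]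
  have hXY : Sᴴ * S + Y = Sᴴ * (1 + M) * S := by
    rw [mul_add, add_mul, Matrix.mul_one, hSM]
  calc (Sᴴ * S).det + Y.det = (Sᴴ * S).det * (1 + M.det) := by
        rw [mul_add, mul_one, ← hSM, det_mul, det_mul, det_mul]
        ring
    _ ≤ (Sᴴ * S).det * (1 + M).det :=
        mul_le_mul_of_nonneg_left hM.one_add_det_le_det_one_add hX.det_pos.le
    _ = (Sᴴ * S + Y).det := by
        rw [hXY, det_mul, det_mul, det_mul]
        ring

theorem PosSemidef.det_add_det_le_det_add {X Y : Matrix n n 𝕜} (hX : X.PosSemidef)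
    (hY : Y.PosSemidef) : X.det + Y.det ≤ (X + Y).det := by
  by_cases hdX : X.det = 0
  · by_cases hdY : Y.det = 0
    · simpa [hdX, hdY] using (hX.add hY).det_nonneg
    · simpa [add_comm] using (hY.posDef_iff_det_ne_zero.mpr hdY).det_add_det_le_det_add hX
  · exact (hX.posDef_iff_det_ne_zero.mpr hdX).det_add_det_le_det_add hY

theorem PosSemidef.det_add_det_le_det_add_add {P Q R : Matrix n n 𝕜} (hP : P.PosSemidef)
    (hQ : Q.PosSemidef) (hR : R.PosSemidef) : P.det + Q.det ≤ (P + Q + R).det :=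
  calc P.det + Q.det ≤ (P + Q).det := hP.det_add_det_le_det_add hQ
    _ ≤ (P + Q).det + R.det := le_add_of_nonneg_right hR.det_nonneg
    _ ≤ (P + Q + R).det := (hP.add hQ).det_add_det_le_det_add hR

end PosSemidef

end Matrix

section Jury

variable {N : ℕ}

theorem jury_comm (A B : Matrix (Fin N) (Fin N) ℂ) : jury A B = jury B A := by
  ext j k
  simp only [jury, of_apply]
  rw [← Fin.sum_Iic_reflect j]
  refine Finset.sum_congr rfl fun m hm => ?_
  rw [← Fin.sum_Iic_reflect k]
  refine Finset.sum_congr rfl fun n hn => ?_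
  rw [Fin.sub_sub_cancel_of_le (mem_Iic.mp hm), Fin.sub_sub_cancel_of_le (mem_Iic.mp hn),
    mul_comm]

theorem jury_vecMulVec_right (A : Matrix (Fin N) (Fin N) ℂ) (y : Fin N → ℂ) :
    jury A (vecMulVec y (star y)) = lowerToeplitz y * A * (lowerToeplitz y)ᴴ := by
  ext j k
  simp only [jury, of_apply, vecMulVec_apply, Pi.star_apply,
    mul_conjTranspose_lowerToeplitz_apply, lowerToeplitz_mul_apply, Finset.sum_mul]
  rw [Finset.sum_comm]
  exact Finset.sum_congr rfl fun _ _ => Finset.sum_congr rfl fun _ _ => by ring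

theorem jury_add_right (A B₁ B₂ : Matrix (Fin N) (Fin N) ℂ) :
    jury A (B₁ + B₂) = jury A B₁ + jury A B₂ := by
  ext j k
  simp [jury, mul_add, Finset.sum_add_distrib]

theorem jury_add_left (A₁ A₂ B : Matrix (Fin N) (Fin N) ℂ) :
    jury (A₁ + A₂) B = jury A₁ B + jury A₂ B := by
  rw [jury_comm, jury_add_right, jury_comm B, jury_comm B]

theorem jury_sum_right {ι : Type*} (A : Matrix (Fin N) (Fin N) ℂ) (s : Finset ι)
    (B : ι → Matrix (Fin N) (Fin N) ℂ) : jury A (∑ i ∈ s, B i) = ∑ i ∈ s, jury A (B i) :=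
  map_sum (AddMonoidHom.mk' (jury A) (jury_add_right A)) B s

theorem Matrix.PosSemidef.jury {A B : Matrix (Fin N) (Fin N) ℂ} (hA : A.PosSemidef)
    (hB : B.PosSemidef) : (jury A B).PosSemidef := by
  obtain ⟨m, v, rfl⟩ := posSemidef_iff_eq_sum_vecMulVec.mp hB
  rw [jury_sum_right]
  refine posSemidef_sum _ fun i _ => ?_
  simpa [jury_vecMulVec_right] using hA.mul_mul_conjTranspose_same (lowerToeplitz (v i))

end Jury

section JuryBorder

variable {n : ℕ}

theorem jury_zero_apply_of_forall_zero_apply {A : Matrix (Fin (n + 1)) (Fin (n + 1)) ℂ}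
    (B : Matrix (Fin (n + 1)) (Fin (n + 1)) ℂ) (h : ∀ k, A 0 k = 0) (k : Fin (n + 1)) :
    jury A B 0 k = 0 := by
  simp [jury, Fin.Iic_zero, h]

theorem jury_apply_zero_of_forall_apply_zero {A : Matrix (Fin (n + 1)) (Fin (n + 1)) ℂ}
    (B : Matrix (Fin (n + 1)) (Fin (n + 1)) ℂ) (h : ∀ j, A j 0 = 0) (j : Fin (n + 1)) :
    jury A B j 0 = 0 := by
  simp [jury, Fin.Iic_zero, h]

theorem det_submatrix_succ_jury_vecMulVec_right {A : Matrix (Fin (n + 1)) (Fin (n + 1)) ℂ}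
    (hA : ∀ j, A 0 j = 0 ∧ A j 0 = 0) (y : Fin (n + 1) → ℂ) :
    ((jury A (vecMulVec y (star y))).submatrix Fin.succ Fin.succ).det =
      (y 0 * star (y 0)) ^ n * (A.submatrix Fin.succ Fin.succ).det := by
  rw [jury_vecMulVec_right, submatrix_succ_mul_mul_of_border_eq_zero _ _ hA, det_mul, det_mul,
    ← conjTranspose_submatrix, det_conjTranspose, det_submatrix_succ_lowerToeplitz, star_pow]
  ring

theorem det_jury_vecMulVec_add {A B : Matrix (Fin (n + 1)) (Fin (n + 1)) ℂ}
    (hA : ∀ j, A 0 j = 0 ∧ A j 0 = 0) (hB : ∀ j, B 0 j = 0 ∧ B j 0 = 0) (x y : Fin (n + 1) → ℂ) :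
    (jury (vecMulVec x (star x) + A) (vecMulVec y (star y) + B)).det =
      x 0 * star (x 0) * (y 0 * star (y 0)) *
        ((jury (vecMulVec x (star x)) B + jury A (vecMulVec y (star y)) + jury A B).submatrix
          Fin.succ Fin.succ).det := by
  have hsplit : jury (vecMulVec x (star x) + A) (vecMulVec y (star y) + B) =
      vecMulVec (lowerToeplitz y *ᵥ x) (star (lowerToeplitz y *ᵥ x)) +
        (jury (vecMulVec x (star x)) B + jury A (vecMulVec y (star y)) + jury A B) := by
    rw [jury_add_left, jury_add_right, jury_add_right, jury_vecMulVec_right,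
      mul_vecMulVec_star_mul_conjTranspose]
    abel
  rw [hsplit, det_vecMulVec_add_of_border_eq_zero, Pi.star_apply, lowerToeplitz_mulVec_zero,
    star_mul]
  · ring
  · intro j
    simp [jury_comm _ B, jury_zero_apply_of_forall_zero_apply, jury_apply_zero_of_forall_apply_zero,
      hA, hB]

end JuryBorder

/-- **Theorem (The inequality).** For `N ≥ 2` and positive semidefinite
`A, B ∈ ℂ^{N×N}`, one has `det (A ⋄ B) ≥ b₀₀^N det A + a₀₀^N det B`. -/
theorem jury_det_ge_add {N : ℕ} (hN : 2 ≤ N) (A B : Matrix (Fin N) (Fin N) ℂ)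
    (hA : A.PosSemidef) (hB : B.PosSemidef) :
    B ⟨0, by omega⟩ ⟨0, by omega⟩ ^ N * A.det + A ⟨0, by omega⟩ ⟨0, by omega⟩ ^ N * B.det
      ≤ (jury A B).det := by
  obtain ⟨n, rfl⟩ : ∃ n, N = n + 2 := ⟨N - 2, by omega⟩
  simp only [Fin.mk_zero]
  obtain ⟨x, A', rfl, hA', hA'0⟩ := hA.exists_eq_vecMulVec_add 0
  obtain ⟨y, B', rfl, hB', hB'0⟩ := hB.exists_eq_vecMulVec_add 0
  have hP := det_submatrix_succ_jury_vecMulVec_right hB'0 x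
  have hQ := det_submatrix_succ_jury_vecMulVec_right hA'0 y
  rw [jury_comm] at hP
  have hsum := PosSemidef.det_add_det_le_det_add_add
    (((posSemidef_vecMulVec_self_star x).jury hB').submatrix Fin.succ)
    ((hA'.jury (posSemidef_vecMulVec_self_star y)).submatrix Fin.succ)
    ((hA'.jury hB').submatrix Fin.succ)
  rw [hP, hQ] at hsum
  rw [det_jury_vecMulVec_add hA'0 hB'0, det_vecMulVec_add_of_border_eq_zero _ _ hA'0,
    det_vecMulVec_add_of_border_eq_zero _ _ hB'0]
  simp only [Matrix.add_apply, vecMulVec_apply, Pi.star_apply, (hA'0 0).1, (hB'0 0).1, add_zero]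
  calc _ = x 0 * star (x 0) * (y 0 * star (y 0)) *
        ((x 0 * star (x 0)) ^ (n + 1) * (B'.submatrix Fin.succ Fin.succ).det +
          (y 0 * star (y 0)) ^ (n + 1) * (A'.submatrix Fin.succ Fin.succ).det) := by ring
    _ ≤ _ := mul_le_mul_of_nonneg_left hsum
        (mul_nonneg (mul_star_self_nonneg _) (mul_star_self_nonneg _))
end

section
/- Let N ≥ 2 and let A ∈ ℂ^{N×N} be positive definite. Then the matrix Ã, obtained from A by subtracting det(A_{N−1})/det(A_{N−2}) from the bottom-right entry a_{N−1,N−1} and leaving all other entries unchanged, is positive semidefinite. (Here A_n denotes the leading principal (n+1)×(n+1) submatrix of A, so A_{N−1} = A; since A is positive definite, det(A_{N−2}) > 0 and the quotient is well defined.) -/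
open Finset Matrix ComplexOrder

/-- `leadDet A n` is the determinant of the leading principal `(n+1) × (n+1)`
submatrix `A_n = (a_{jk})_{j,k=0}^{n}` of `A` (junk value `0` if `n ≥ N`). -/
noncomputable def leadDet {N : ℕ} (A : Matrix (Fin N) (Fin N) ℂ) (n : ℕ) : ℂ :=
  if h : n < N then
    (A.submatrix (Fin.castLE h) (Fin.castLE h) : Matrix (Fin (n + 1)) (Fin (n + 1)) ℂ).det
  else 0

/-! Split off the last index: `A = [[P, b], [b*, d]]` with `P = A_{N-2}` positive definite. The
Schur determinant formula gives `det A / det P = d - b* P⁻¹ b`, so `Ã = [[P, b], [b*, b* P⁻¹ b]]`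
has vanishing Schur complement with respect to `P`, and a Hermitian block matrix with positive
definite leading block is positive semidefinite exactly when that Schur complement is. -/

namespace Matrix

theorem of_ite_sub_eq_sub_single {m n α : Type*} [DecidableEq m] [DecidableEq n] [AddGroup α]
    (A : Matrix m n α) (i : m) (j : n) (c : α) :
    (of fun k l => if k = i ∧ l = j then A k l - c else A k l) = A - single i j c := by
  ext k l
  by_cases h : k = i ∧ l = j
  · obtain ⟨rfl, rfl⟩ := h
    simp
  · have h' : ¬(i = k ∧ j = l) := fun h' => h ⟨h'.1.symm, h'.2.symm⟩
    rw [of_apply, if_neg h, sub_apply, single_apply_of_ne _ _ _ _ _ h', sub_zero]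

variable {m n K : Type*} [Fintype m] [Fintype n] [DecidableEq m] [Field K]

theorem det_fromBlocks_div_det_of_unique [DecidableEq n] [Unique n] {P : Matrix m m K}
    (hP : IsUnit P) (B : Matrix m n K) (C : Matrix n m K) (D : Matrix n n K) :
    (fromBlocks P B C D).det / P.det = (D - C * P⁻¹ * B) default default := by
  have := hP.invertible
  have hdet : P.det ≠ 0 := ((isUnit_iff_isUnit_det P).mp hP).ne_zero
  rw [det_fromBlocks₁₁, det_unique (D - C * ⅟P * B), invOf_eq_nonsing_inv,
    mul_div_cancel_left₀ _ hdet]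

variable [PartialOrder K] [StarRing K] [StarOrderedRing K]

theorem PosDef.posSemidef_fromBlocks_conjTranspose_mul_inv_mul {P : Matrix m m K}
    (hP : P.PosDef) (B : Matrix m n K) : (fromBlocks P B Bᴴ (Bᴴ * P⁻¹ * B)).PosSemidef := by
  have := hP.isUnit.invertible
  rw [hP.fromBlocks₁₁ B _, sub_self]
  exact .zero

theorem IsHermitian.posSemidef_sub_single_det_div_det_toBlocks₁₁ [DecidableEq n] [Unique n]
    {M : Matrix (m ⊕ n) (m ⊕ n) K} (hM : M.IsHermitian) (hM₁₁ : M.toBlocks₁₁.PosDef) :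
    (M - single (Sum.inr default) (Sum.inr default) (M.det / M.toBlocks₁₁.det)).PosSemidef := by
  obtain ⟨P, B, D, rfl⟩ : ∃ P B D, M = Matrix.fromBlocks P B Bᴴ D := by
    have hM₂₁ := (isHermitian_fromBlocks_iff.mp ((fromBlocks_toBlocks M).symm ▸ hM)).2.1
    exact ⟨_, _, _, by rw [hM₂₁, fromBlocks_toBlocks]⟩
  rw [toBlocks_fromBlocks₁₁] at hM₁₁ ⊢
  have hsub : Matrix.fromBlocks P B Bᴴ D - single (Sum.inr default) (Sum.inr default)
      ((D - Bᴴ * P⁻¹ * B) default default) = Matrix.fromBlocks P B Bᴴ (Bᴴ * P⁻¹ * B) := by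
    ext (i | i) (j | j) <;> simp [single, Unique.eq_default]
  rw [det_fromBlocks_div_det_of_unique hM₁₁.isUnit, hsub]
  exact hM₁₁.posSemidef_fromBlocks_conjTranspose_mul_inv_mul B

end Matrix

/-- If `A ∈ ℂ^{N×N}` (`N ≥ 2`) is positive definite, then the matrix `Ã` obtained
from `A` by subtracting `det(A_{N-1})/det(A_{N-2})` from the bottom-right entry
(and leaving all other entries unchanged) is positive semidefinite.
Here `A_{N-1} = A`. -/
theorem tilde_posSemidef {N : ℕ} (hN : 2 ≤ N) (A : Matrix (Fin N) (Fin N) ℂ)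
    (hA : A.PosDef) :
    (Matrix.of fun j k : Fin N =>
        if j = (⟨N - 1, by omega⟩ : Fin N) ∧ k = (⟨N - 1, by omega⟩ : Fin N) then
          A j k - A.det / leadDet A (N - 2)
        else A j k).PosSemidef := by
  obtain ⟨n, rfl⟩ : ∃ n, N = n + 2 := ⟨N - 2, by omega⟩
  change (of fun j k : Fin (n + 2) =>
    if j = Fin.last (n + 1) ∧ k = Fin.last (n + 1) then A j k - A.det / leadDet A n
    else A j k).PosSemidef
  let e : Fin (n + 1) ⊕ Fin 1 ≃ Fin (n + 2) := finSumFinEquiv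
  have hlast : e.symm (Fin.last (n + 1)) = Sum.inr 0 := by simp [e]
  have hleadDet : leadDet A n = (A.submatrix e e).toBlocks₁₁.det := by
    rw [leadDet, dif_pos (by omega)]
    rfl
  have hP : (A.submatrix e e).toBlocks₁₁.PosDef :=
    (hA.submatrix e.injective).submatrix Sum.inl_injective
  rw [of_ite_sub_eq_sub_single, ← posSemidef_submatrix_equiv e, submatrix_sub, Pi.sub_apply,
    Pi.sub_apply, submatrix_single_equiv, hlast, hleadDet, ← det_submatrix_equiv_self e A]
  exact (hA.1.submatrix e).posSemidef_sub_single_det_div_det_toBlocks₁₁ hP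
end

section
/- Let N ≥ 1. For each n = 0,…,N−1, fix a set T_n ⊆ {0,…,n} with n ∈ T_n and a permutation σ_n of T_n, and let ⋆ denote the associated causal product of N×N complex matrices. If A and B are positive semidefinite N×N complex matrices, then A ⋆ B is positive semidefinite. -/
open Finset Matrix ComplexOrder

/-- The causal product determined by data `(T_n, σ_n)`: for `N × N` complex matrices,
`(A ⋆ B)_{jk} = ∑_{(p,q) ∈ T_j × T_k} a_{p,q} b_{σ_j(p), σ_k(q)}`. -/
noncomputable def causal {N : ℕ} (T : Fin N → Finset (Fin N))
    (σ : ∀ n, Equiv.Perm {x // x ∈ T n}) (A B : Matrix (Fin N) (Fin N) ℂ) :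
    Matrix (Fin N) (Fin N) ℂ :=
  Matrix.of fun j k =>
    ∑ p ∈ (T j).attach, ∑ q ∈ (T k).attach, A p.1 q.1 * B (σ j p).1 (σ k q).1

/-!
The entry `(A ⋆ B)_{jk}` is the sum of the `(j, k)` block of the principal submatrix of
`A ⊗ B` on the index pairs `(p, σ_j p)`, `p ∈ T_j`. That submatrix is positive semidefinite
because `A ⊗ B` is, and summing blocks is the congruence `M ↦ Cᴴ M C` with the `0/1` matrix
`C` sending a block index to its block, which preserves positive semidefiniteness.
-/

open scoped Kronecker

namespace Matrix

variable {ι R : Type*} {β : ι → Type*} [∀ i, Fintype (β i)]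

def blockSum [AddCommMonoid R] (M : Matrix (Σ i, β i) (Σ i, β i) R) : Matrix ι ι R :=
  of fun j k => ∑ p, ∑ q, M ⟨j, p⟩ ⟨k, q⟩

def sigmaIndicator [DecidableEq ι] [Zero R] [One R] : Matrix (Σ i, β i) ι R :=
  of fun a k => if a.1 = k then 1 else 0

variable [Fintype ι] [DecidableEq ι]

theorem mul_sigmaIndicator_apply [NonAssocSemiring R] {κ : Type*}
    (X : Matrix κ (Σ i, β i) R) (a : κ) (k : ι) :
    (X * (sigmaIndicator : Matrix (Σ i, β i) ι R)) a k = ∑ q, X a ⟨k, q⟩ := by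
  simp only [mul_apply, sigmaIndicator, Fintype.sum_sigma, of_apply, mul_ite, mul_one, mul_zero]
  rw [Fintype.sum_eq_single k fun i hi => by simp [hi]]
  simp

theorem conjTranspose_sigmaIndicator_mul_apply [NonAssocSemiring R] [StarRing R] {κ : Type*}
    (X : Matrix (Σ i, β i) κ R) (j : ι) (b : κ) :
    ((sigmaIndicator : Matrix (Σ i, β i) ι R)ᴴ * X) j b = ∑ p, X ⟨j, p⟩ b := by
  simp only [mul_apply, sigmaIndicator, Fintype.sum_sigma, conjTranspose_apply, of_apply,
    apply_ite star, star_one, star_zero, ite_mul, one_mul, zero_mul]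
  rw [Fintype.sum_eq_single j fun i hi => by simp [hi]]
  simp

theorem blockSum_eq_conjTranspose_mul_mul [NonAssocSemiring R] [StarRing R]
    (M : Matrix (Σ i, β i) (Σ i, β i) R) :
    blockSum M =
      (sigmaIndicator : Matrix (Σ i, β i) ι R)ᴴ * M * (sigmaIndicator : Matrix (Σ i, β i) ι R) := by
  ext j k
  simp only [blockSum, of_apply, mul_sigmaIndicator_apply, conjTranspose_sigmaIndicator_mul_apply]
  exact Finset.sum_comm

omit [DecidableEq ι] in
theorem PosSemidef.blockSum [Ring R] [PartialOrder R] [StarRing R]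
    {M : Matrix (Σ i, β i) (Σ i, β i) R} (hM : M.PosSemidef) : M.blockSum.PosSemidef := by
  classical
  rw [blockSum_eq_conjTranspose_mul_mul]
  exact hM.conjTranspose_mul_mul_same _

end Matrix

theorem causal_eq_blockSum_submatrix_kronecker {N : ℕ} (T : Fin N → Finset (Fin N))
    (σ : ∀ n, Equiv.Perm {x // x ∈ T n}) (A B : Matrix (Fin N) (Fin N) ℂ) :
    causal T σ A B = ((A ⊗ₖ B).submatrix (fun i : Σ j, T j => (i.2.1, (σ i.1 i.2).1))
      (fun i : Σ j, T j => (i.2.1, (σ i.1 i.2).1))).blockSum := by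
  ext j k
  simp [causal, blockSum, Finset.univ_eq_attach]

theorem causal_posSemidef_general {N : ℕ} (T : Fin N → Finset (Fin N))
    (σ : ∀ n, Equiv.Perm {x // x ∈ T n})
    (A B : Matrix (Fin N) (Fin N) ℂ) (hA : A.PosSemidef) (hB : B.PosSemidef) :
    (causal T σ A B).PosSemidef := by
  rw [causal_eq_blockSum_submatrix_kronecker]
  exact ((hA.kronecker hB).submatrix _).blockSum

/-- If `A, B ∈ ℂ^{N×N}` are positive semidefinite, then so is their causal
product `A ⋆ B`, for any data `T_n ⊆ {0,…,n}` with `n ∈ T_n` and permutations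
`σ_n : T_n → T_n`. -/
theorem causal_posSemidef {N : ℕ} (hN : 1 ≤ N) (T : Fin N → Finset (Fin N))
    (hT : ∀ n, T n ⊆ Finset.Iic n) (hmem : ∀ n, n ∈ T n)
    (σ : ∀ n, Equiv.Perm {x // x ∈ T n})
    (A B : Matrix (Fin N) (Fin N) ℂ) (hA : A.PosSemidef) (hB : B.PosSemidef) :
    (causal T σ A B).PosSemidef :=
  causal_posSemidef_general T σ A B hA hB
end

section
/- Let A = (a_{jk}) and B = (b_{jk}) be positive semidefinite 2×2 complex matrices. Then det(A ⋄ B) = b_{00}^2 · det A + a_{00}^2 · det B, where ⋄ denotes the Jury product; i.e., for N = 2 the main inequality det(A ⋄ B) ≥ b_{00}^N det A + a_{00}^N det B holds as an identity. -/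
open Finset Matrix ComplexOrder

/-- For `N = 2` the main inequality holds as an identity: for positive semidefinite
`2 × 2` complex matrices `A, B`, `det (A ⋄ B) = b₀₀² det A + a₀₀² det B`. -/
theorem jury_det_two_eq (A B : Matrix (Fin 2) (Fin 2) ℂ)
    (hA : A.PosSemidef) (hB : B.PosSemidef) :
    (jury A B).det = B 0 0 ^ 2 * A.det + A 0 0 ^ 2 * B.det := by
  simp only [jury, Matrix.det_fin_two, Matrix.of_apply,
    show Finset.Iic (0:Fin 2) = {0} by decide, show Finset.Iic (1:Fin 2) = {0,1} by decide,
    Finset.sum_insert, Finset.sum_singleton, Finset.mem_singleton]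
  norm_num
  ring
end
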